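/- For every integer n ≥ 1 and every ρ > 0, the monic polynomial u_{n+1}^ρ := e_{n+1} − L_n^ρ e_{n+1} of degree n+1 (where e_{n+1}(x) = x^{n+1}) has n+1 distinct roots in the interval [0,1]. -/

import Mathlib

open MeasureTheory

/-- Euler Beta function `B(a,b) = ∫₀¹ t^(a-1) (1-t)^(b-1) dt`. -/
noncomputable def betaFn (a b : ℝ) : ℝ :=
  ∫ t in (0:ℝ)..1, t ^ (a - 1) * (1 - t) ^ (b - 1)

/-- The functionals `F_{n,k}^ρ`. -/
noncomputable def Ffun (n k : ℕ) (ρ : ℝ) (f : ℝ → ℝ) : ℝ :=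
  if k = 0 then f 0
  else if k = n then f 1
  else (betaFn ((k : ℝ) * ρ) (((n : ℝ) - (k : ℝ)) * ρ))⁻¹ *
    ∫ t in (0:ℝ)..1, t ^ ((k : ℝ) * ρ - 1) * (1 - t) ^ (((n : ℝ) - (k : ℝ)) * ρ - 1) * f t

/-- Bernstein basis polynomial `p_{n,k}(x)`. -/
noncomputable def bern (n k : ℕ) (x : ℝ) : ℝ :=
  (n.choose k : ℝ) * x ^ k * (1 - x) ^ (n - k)

/-- The operator `U_n^ρ`. -/
noncomputable def Uop (n : ℕ) (ρ : ℝ) (f : ℝ → ℝ) (x : ℝ) : ℝ :=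
  ∑ k ∈ Finset.range (n + 1), Ffun n k ρ f * bern n k x

/-!
For `0 < k < n` the functional `F_{n,k}^ρ` integrates against the Beta kernel
`w_k(t) = t^(kρ-1) (1-t)^((n-k)ρ-1)`, and `w_{j+1} = w_1 c^j` with `c(t) = (t/(1-t))^ρ` strictly
increasing on `(0,1)`. Hence `p = e_{n+1} - L_n^ρ e_{n+1}`, which vanishes at `0` and `1`, satisfies
`∫ w_1 (Q ∘ c) p = 0` for every polynomial `Q` of degree `< n - 1`. If `p` changed sign at fewer than
`n - 1` points `r` of `(0,1)`, then `Q = ∏ (X - c r)` would make `w_1 (Q ∘ c) p` of constant sign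
off the roots of `p`, so its integral could not vanish.
-/

open Set Polynomial

theorem setIntegral_pos_of_pos_off_countable {α : Type*} [MeasurableSpace α] {μ : Measure α}
    [NullSingletonClass μ] {s S : Set α} {f : α → ℝ} (hs : MeasurableSet s) (hμs : μ s ≠ 0)
    (hS : S.Countable) (hf : IntegrableOn f s μ) (hpos : ∀ t ∈ s \ S, 0 < f t) :
    0 < ∫ t in s, f t ∂μ := by
  have hS0 : μ S = 0 := hS.measure_zero μ
  have hnotS : ∀ᵐ t ∂μ.restrict s, t ∉ S :=
    ae_restrict_of_ae (measure_eq_zero_iff_ae_notMem.1 hS0)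
  rw [setIntegral_pos_iff_support_of_nonneg_ae _ hf]
  · calc 0 < μ (s \ S) := by rw [measure_sdiff_null hS0]; exact pos_iff_ne_zero.2 hμs
      _ ≤ μ (Function.support f ∩ s) := measure_mono fun t ht => ⟨(hpos t ht).ne', ht.1⟩
  · filter_upwards [hnotS, ae_restrict_mem hs] with t htS hts
    exact (hpos t ⟨hts, htS⟩).le

theorem StrictMonoOn.prod_sub_mul_sub_pos {I : Set ℝ} {c : ℝ → ℝ} (hc : StrictMonoOn c I)
    {S : Finset ℝ} (hSI : ↑S ⊆ I) {t : ℝ} (ht : t ∈ I) (htS : t ∉ S) :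
    0 < ∏ r ∈ S, (c t - c r) * (t - r) := by
  refine Finset.prod_pos fun r hr => ?_
  rcases lt_or_gt_of_ne (ne_of_mem_of_not_mem hr htS).symm with h | h
  · exact mul_pos_of_neg_of_neg (sub_neg.2 (hc ht (hSI hr) h)) (sub_neg.2 h)
  · exact mul_pos (sub_pos.2 (hc (hSI hr) ht h)) (sub_pos.2 h)

theorem Polynomial.exists_roots_mul_prod_sub_constant_sign {I : Set ℝ} (hI : I.OrdConnected)
    (p : ℝ[X]) : ∃ S : Finset ℝ, ↑S ⊆ I ∧ (∀ r ∈ S, p.IsRoot r) ∧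
      ∃ ε : ℝ, ∀ t ∈ I, ¬p.IsRoot t → 0 < ε * (p.eval t * ∏ r ∈ S, (t - r)) := by
  classical
  induction hd : p.natDegree using Nat.strong_induction_on generalizing p with
  | _ d ih =>
  by_cases hroot : ∃ r ∈ I, p.IsRoot r
  · obtain ⟨r, hrI, hr⟩ := hroot
    by_cases hp : p = 0
    · exact ⟨∅, by simp, by simp, 0, by simp [hp]⟩
    set q := p /ₘ (X - C r)
    have hmul : (X - C r) * q = p := mul_divByMonic_eq_iff_isRoot.2 hr
    have hq : q ≠ 0 := by rintro h; rw [h, mul_zero] at hmul; exact hp hmul.symm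
    have hdeg : q.natDegree < d := by
      rw [← hd, ← hmul, natDegree_mul (X_sub_C_ne_zero r) hq, natDegree_X_sub_C]; omega
    have heval : ∀ t, p.eval t = (t - r) * q.eval t := by simp [← hmul]
    obtain ⟨S, hSI, hSroot, ε, hε⟩ := ih _ hdeg q rfl
    have hqroot : ∀ t, q.IsRoot t → p.IsRoot t := fun t ht => by
      rw [IsRoot, heval, ht.eq_zero, mul_zero]
    by_cases hrS : r ∈ S
    · -- `t - r` cancels the sign change of `q` at `r`
      refine ⟨S.erase r, (Finset.coe_subset.2 (Finset.erase_subset r S)).trans hSI,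
        fun x hx => ?_, ε, fun t ht hpt => ?_⟩
      · exact hqroot x (hSroot x (Finset.mem_of_mem_erase hx))
      · calc 0 < ε * (q.eval t * ∏ x ∈ S, (t - x)) := hε t ht (mt (hqroot t) hpt)
          _ = _ := by rw [← Finset.mul_prod_erase S _ hrS, heval]; ring
    · refine ⟨insert r S, by simpa [insert_subset_iff] using ⟨hrI, hSI⟩,
        fun x hx => ?_, ε, fun t ht hpt => ?_⟩
      · rcases Finset.mem_insert.1 hx with rfl | hx
        · exact hr
        · exact hqroot x (hSroot x hx)
      · have htr : t - r ≠ 0 := sub_ne_zero.2 fun h => hpt (h ▸ hr)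
        calc 0 < (t - r) ^ 2 * (ε * (q.eval t * ∏ x ∈ S, (t - x))) :=
              mul_pos (by positivity) (hε t ht (mt (hqroot t) hpt))
          _ = _ := by rw [Finset.prod_insert hrS, heval]; ring
  · push Not at hroot
    rcases I.eq_empty_or_nonempty with rfl | ⟨t₀, ht₀⟩
    · exact ⟨∅, by simp, by simp, 0, by simp⟩
    refine ⟨∅, by simp, by simp, p.eval t₀, fun t ht _ => ?_⟩
    rw [Finset.prod_empty, mul_one]
    by_contra! hneg
    have h0 : (0 : ℝ) ∈ uIcc (p.eval t₀) (p.eval t) := by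
      rw [mem_uIcc]; rcases mul_nonpos_iff.1 hneg with h | h
      exacts [Or.inr ⟨h.2, h.1⟩, Or.inl h]
    obtain ⟨x, hx, hx0⟩ := intermediate_value_uIcc p.continuous.continuousOn h0
    exact hroot x (hI.uIcc_subset ht₀ ht hx) hx0

theorem Polynomial.exists_roots_card_ge_of_integral_eq_zero {a b : ℝ} (hab : a < b)
    {w : ℕ → ℝ → ℝ} {c : ℝ → ℝ} {p : ℝ[X]} {m : ℕ} (hp : p ≠ 0)
    (hw : ∀ t ∈ Ioo a b, 0 < w 0 t) (hwc : ∀ j, ∀ t ∈ Ioo a b, w j t = w 0 t * c t ^ j)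
    (hc : StrictMonoOn c (Ioo a b))
    (hint : ∀ j < m, IntegrableOn (fun t => w j t * p.eval t) (Ioo a b))
    (horth : ∀ j < m, ∫ t in Ioo a b, w j t * p.eval t = 0) :
    ∃ S : Finset ℝ, m ≤ S.card ∧ ↑S ⊆ Ioo a b ∧ ∀ r ∈ S, p.IsRoot r := by
  obtain ⟨S, hSI, hSroot, ε, hε⟩ := p.exists_roots_mul_prod_sub_constant_sign ordConnected_Ioo
  refine ⟨S, not_lt.1 fun hSm => ?_, hSI, hSroot⟩
  set Q : ℝ[X] := ∏ r ∈ S, (X - C (c r))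
  have hQ : Q.natDegree < m := by
    rw [natDegree_prod_of_monic _ _ fun r _ => monic_X_sub_C (c r)]
    simpa using hSm
  have hQw : ∀ t ∈ Ioo a b, w 0 t * Q.eval (c t) * p.eval t =
      ∑ j ∈ Finset.range m, Q.coeff j * (w j t * p.eval t) := by
    intro t ht
    simp only [eval_eq_sum_range' hQ, Finset.mul_sum, Finset.sum_mul]
    refine Finset.sum_congr rfl fun j _ => ?_
    rw [hwc j t ht]; ring
  have hint' : IntegrableOn (fun t => ε * (w 0 t * Q.eval (c t) * p.eval t)) (Ioo a b) :=
    (IntegrableOn.congr_fun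
      (integrable_finsetSum _ fun j hj => (hint j (Finset.mem_range.1 hj)).const_mul (Q.coeff j))
      (fun t ht => (hQw t ht).symm) measurableSet_Ioo).const_mul ε
  have hzero : ∫ t in Ioo a b, ε * (w 0 t * Q.eval (c t) * p.eval t) = 0 := by
    rw [integral_const_mul, setIntegral_congr_fun measurableSet_Ioo hQw,
      integral_finsetSum _ fun j hj => (hint j (Finset.mem_range.1 hj)).const_mul _,
      Finset.sum_eq_zero fun j hj => ?_, mul_zero]
    rw [integral_const_mul, horth j (Finset.mem_range.1 hj), mul_zero]
  have hpos : ∀ t ∈ Ioo a b \ {t | p.IsRoot t}, 0 < ε * (w 0 t * Q.eval (c t) * p.eval t) := by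
    rintro t ⟨ht, hpt⟩
    have hQc : Q.eval (c t) = ∏ r ∈ S, (c t - c r) := by simp [Q, eval_prod]
    have hsign := hc.prod_sub_mul_sub_pos hSI ht fun h => hpt (hSroot t h)
    refine pos_of_mul_pos_left (b := (∏ r ∈ S, (t - r)) ^ 2) ?_ (sq_nonneg _)
    calc 0 < w 0 t * (ε * (p.eval t * ∏ r ∈ S, (t - r))) * ∏ r ∈ S, (c t - c r) * (t - r) :=
          mul_pos (mul_pos (hw t ht) (hε t ht hpt)) hsign
      _ = _ := by rw [hQc, Finset.prod_mul_distrib]; ring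
  exact (setIntegral_pos_of_pos_off_countable measurableSet_Ioo (by simp [hab])
    (finite_setOfPred_isRoot hp).countable hint' hpos).ne' hzero

theorem Polynomial.exists_card_eq_roots_Icc {p : ℝ[X]} {S : Finset ℝ} {m : ℕ}
    (hSm : m ≤ S.card) (hSI : (S : Set ℝ) ⊆ Ioo 0 1) (hSroot : ∀ r ∈ S, p.IsRoot r)
    (h0 : p.IsRoot 0) (h1 : p.IsRoot 1) :
    ∃ s : Finset ℝ, s.card = m + 2 ∧ (s : Set ℝ) ⊆ Icc 0 1 ∧ ∀ x ∈ s, p.IsRoot x := by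
  have hmem : ∀ x ∈ insert 0 (insert 1 S), x ∈ Icc (0 : ℝ) 1 ∧ p.IsRoot x := by
    simp only [Finset.mem_insert]
    rintro x (rfl | rfl | hx)
    exacts [⟨left_mem_Icc.2 zero_le_one, h0⟩, ⟨right_mem_Icc.2 zero_le_one, h1⟩,
      ⟨Ioo_subset_Icc_self (hSI hx), hSroot x hx⟩]
  have hS1 : (1 : ℝ) ∉ S := fun h => lt_irrefl _ (hSI h).2
  have hS0 : (0 : ℝ) ∉ insert 1 S := by
    simpa [Finset.mem_insert] using fun h => lt_irrefl _ (hSI h).1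
  have hcard : m + 2 ≤ (insert 0 (insert 1 S)).card := by
    rw [Finset.card_insert_of_notMem hS0, Finset.card_insert_of_notMem hS1]
    omega
  obtain ⟨s, hs, hscard⟩ := Finset.exists_subset_card_eq hcard
  exact ⟨s, hscard, fun x hx => (hmem x (hs hx)).1, fun x hx => (hmem x (hs hx)).2⟩

noncomputable def betaKernel (a b t : ℝ) : ℝ := t ^ (a - 1) * (1 - t) ^ (b - 1)

theorem betaKernel_pos {a b t : ℝ} (ht : t ∈ Ioo 0 1) : 0 < betaKernel a b t :=
  mul_pos (Real.rpow_pos_of_pos ht.1 _) (Real.rpow_pos_of_pos (sub_pos.2 ht.2) _)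

theorem betaKernel_one_sub (a b t : ℝ) : betaKernel a b (1 - t) = betaKernel b a t := by
  rw [betaKernel, betaKernel, sub_sub_cancel, mul_comm]

theorem intervalIntegrable_betaKernel_zero_half {a : ℝ} (ha : 0 < a) (b : ℝ) :
    IntervalIntegrable (betaKernel a b) volume 0 (1 / 2) := by
  refine (intervalIntegral.intervalIntegrable_rpow' (by linarith)).mul_continuousOn ?_
  refine ContinuousOn.rpow_const (f := fun t : ℝ => 1 - t) (by fun_prop) fun t ht => Or.inl ?_
  rw [uIcc_of_le (by norm_num)] at ht
  linarith [ht.2]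

theorem intervalIntegrable_betaKernel {a b : ℝ} (ha : 0 < a) (hb : 0 < b) :
    IntervalIntegrable (betaKernel a b) volume 0 1 := by
  refine (intervalIntegrable_betaKernel_zero_half ha b).trans ?_
  have := ((intervalIntegrable_betaKernel_zero_half hb a).comp_sub_left 1).symm
  norm_num [betaKernel_one_sub] at this
  exact this

theorem integrableOn_betaKernel_mul {a b : ℝ} (ha : 0 < a) (hb : 0 < b) {f : ℝ → ℝ}
    (hf : Continuous f) : IntegrableOn (fun t => betaKernel a b t * f t) (Ioo 0 1) :=
  ((intervalIntegrable_betaKernel ha hb).mul_continuousOn hf.continuousOn).1.mono_set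
    Ioo_subset_Ioc_self

theorem betaFn_pos {a b : ℝ} (ha : 0 < a) (hb : 0 < b) : 0 < betaFn a b :=
  intervalIntegral.intervalIntegral_pos_of_pos_on (intervalIntegrable_betaKernel ha hb)
    (fun _ ht => betaKernel_pos ht) zero_lt_one

theorem betaKernel_natCast_succ_mul (n j : ℕ) (ρ : ℝ) {t : ℝ} (ht : t ∈ Ioo 0 1) :
    betaKernel ((j + 1 : ℕ) * ρ) ((n - (j + 1 : ℕ)) * ρ) t =
      betaKernel ρ ((n - 1) * ρ) t * ((t / (1 - t)) ^ ρ) ^ j := by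
  have h0 : 0 < t := ht.1
  have h1 : 0 < 1 - t := sub_pos.2 ht.2
  have e1 : ((j + 1 : ℕ) : ℝ) * ρ - 1 = (ρ - 1) + ρ * j := by push_cast; ring
  have e2 : ((n : ℝ) - (j + 1 : ℕ)) * ρ - 1 = ((n - 1) * ρ - 1) - ρ * j := by push_cast; ring
  rw [betaKernel, betaKernel, e1, e2, Real.rpow_add h0, Real.rpow_sub h1, ← Real.rpow_natCast,
    ← Real.rpow_mul (div_nonneg h0.le h1.le), Real.div_rpow h0.le h1.le]
  ring

theorem strictMonoOn_div_one_sub_rpow {ρ : ℝ} (hρ : 0 < ρ) :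
    StrictMonoOn (fun t : ℝ => (t / (1 - t)) ^ ρ) (Ioo 0 1) := by
  intro u hu v hv huv
  refine Real.rpow_lt_rpow (div_nonneg hu.1.le (sub_pos.2 hu.2).le) ?_ hρ
  rw [div_lt_div_iff₀ (sub_pos.2 hu.2) (sub_pos.2 hv.2)]
  nlinarith

theorem integral_betaKernel_mul_sub_eq_zero_of_Ffun_eq {n k : ℕ} {ρ : ℝ}
    (ha : 0 < (k : ℝ) * ρ) (hb : 0 < ((n : ℝ) - k) * ρ) {f g : ℝ → ℝ}
    (hf : Continuous f) (hg : Continuous g) (hfg : Ffun n k ρ f = Ffun n k ρ g) :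
    ∫ t in Ioo 0 1, betaKernel (k * ρ) ((n - k) * ρ) t * (f t - g t) = 0 := by
  have hk : k ≠ 0 := by rintro rfl; simp at ha
  have hkn : k ≠ n := by rintro rfl; simp at hb
  simp only [Ffun, hk, hkn, if_false, intervalIntegral.integral_of_le zero_le_one,
    integral_Ioc_eq_integral_Ioo] at hfg
  simp only [mul_sub]
  rw [integral_sub (integrableOn_betaKernel_mul ha hb hf) (integrableOn_betaKernel_mul ha hb hg),
    sub_eq_zero]
  exact mul_left_cancel₀ (inv_ne_zero (betaFn_pos ha hb).ne') hfg

/-- The monic polynomial `u_{n+1}^ρ = e_{n+1} − L_n^ρ e_{n+1}` of degree `n+1`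
has `n+1` distinct roots in `[0,1]`. -/
theorem u_has_distinct_roots (n : ℕ) (hn : 1 ≤ n) (ρ : ℝ) (hρ : 0 < ρ)
    (L : Polynomial ℝ) (hLdeg : L.natDegree ≤ n)
    (hL : ∀ k ≤ n, Ffun n k ρ (fun x => L.eval x) = Ffun n k ρ (fun x => x ^ (n + 1))) :
    ∃ s : Finset ℝ, s.card = n + 1 ∧ ↑s ⊆ Set.Icc (0 : ℝ) 1 ∧
      ∀ x ∈ s, (Polynomial.X ^ (n + 1) - L).eval x = 0 := by
  set p : ℝ[X] := X ^ (n + 1) - L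
  have hp : p ≠ 0 := (monic_X_pow_sub
    ((degree_le_of_natDegree_le hLdeg).trans_lt (WithBot.coe_lt_coe.2 n.lt_succ_self))).ne_zero
  have hp0 : p.IsRoot 0 := by simpa [p, Ffun, sub_eq_zero, eq_comm] using hL 0 n.zero_le
  have hp1 : p.IsRoot 1 := by
    simpa [p, Ffun, sub_eq_zero, Nat.one_le_iff_ne_zero.1 hn] using (hL n le_rfl).symm
  set w : ℕ → ℝ → ℝ := fun j => betaKernel ((j + 1 : ℕ) * ρ) ((n - (j + 1 : ℕ)) * ρ)
  have hparams : ∀ j < n - 1, 0 < ((j + 1 : ℕ) : ℝ) * ρ ∧ 0 < ((n : ℝ) - (j + 1 : ℕ)) * ρ :=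
    fun j hj => ⟨by positivity, mul_pos (sub_pos.2 (by exact_mod_cast (by omega : j + 1 < n))) hρ⟩
  have horth : ∀ j < n - 1, ∫ t in Ioo 0 1, w j t * p.eval t = 0 := fun j hj => by
    simpa [w, p] using integral_betaKernel_mul_sub_eq_zero_of_Ffun_eq (hparams j hj).1
      (hparams j hj).2 (continuous_pow (n + 1)) L.continuous (hL (j + 1) (by omega)).symm
  obtain ⟨S, hSm, hSI, hSroot⟩ := exists_roots_card_ge_of_integral_eq_zero zero_lt_one hp
    (fun t ht => betaKernel_pos ht)
    (fun j t ht => by simp only [betaKernel_natCast_succ_mul n _ ρ ht, pow_zero, mul_one])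
    (strictMonoOn_div_one_sub_rpow hρ)
    (fun j hj => integrableOn_betaKernel_mul (hparams j hj).1 (hparams j hj).2 p.continuous)
    horth
  obtain ⟨s, hscard, hsI, hsroot⟩ := exists_card_eq_roots_Icc hSm hSI hSroot hp0 hp1
  exact ⟨s, by omega, hsI, hsroot⟩
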